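/- arXiv:2405.00224 — 2 statements merged into one kernel-verified Lean document; each statement's English description precedes it below -/
import Mathlib

section
/- Let T > 0 and let φ₁,…,φ_N : [0,T) → ℝ be nondecreasing differentiable functions with p₀·(T/(T-t))² ≤ φᵢ(t) ≤ p₂(T/(T-t)) for p₀ > 0 and a polynomial p₂ with nonnegative coefficients. Let A be the N×N matrix with diagonal entries -aᵢ < 0 and off-diagonal entries bᵢⱼ > 0, and suppose there is a row vector q with strictly positive entries and δ > 0 such that q·A ≤ -δ·q entrywise. If V₁,…,V_N : [0,T) → [0,∞) are differentiable with Vᵢ' ≤ φᵢ·(-aᵢVᵢ + Σ_{j≠i} bᵢⱼVⱼ), then Vᵢ(t) ≤ (φᵢ(t)/qᵢ)·V̄(0)·exp(-δ·∫₀ᵗ min_j φⱼ(s) ds) where V̄(0) = Σⱼ qⱼVⱼ(0)/φⱼ(0), and consequently each Vᵢ(t) → 0 as t → T⁻. -/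
/-!
Since each `φᵢ` is nondecreasing, `(Vᵢ/φᵢ)' ≤ Vᵢ'/φᵢ ≤ (A V)ᵢ`, so for `W = ∑ᵢ qᵢVᵢ/φᵢ` the
condition `q A ≤ -δ q` gives `W' ≤ -δ q·V ≤ -δ (minⱼ φⱼ) W`, and a Grönwall argument yields
`W(t) ≤ W(0) exp(-δ ∫₀ᵗ minⱼ φⱼ)`. The lower bound `φⱼ ≥ p₀ (T/(T-t))²` makes this integral at
least `p₀ T (T/(T-t) - 1)`, and the resulting exponential decay in `T/(T-t)` beats the
polynomial bound `φᵢ ≤ p₂(T/(T-t))` as `t → T⁻`.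
-/

open Filter Set Matrix Topology

theorem accPt_Ico {a b x : ℝ} (hx : x ∈ Ico a b) : AccPt x (𝓟 (Ico a b)) := by
  rw [accPt_principal_iff_nhdsWithin]
  have : (𝓝[Ioo x b] x).NeBot := by rw [nhdsWithin_Ioo_eq_nhdsGT hx.2]; infer_instance
  exact this.mono (nhdsWithin_mono _ fun y hy => ⟨⟨hx.1.trans hy.1.le, hy.2⟩, hy.1.ne'⟩)

theorem ContinuousOn.ciInf_apply {ι X L : Type*} [Fintype ι] [Nonempty ι] [TopologicalSpace X]
    [ConditionallyCompleteLinearOrder L] [TopologicalSpace L] [OrderTopology L]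
    {f : ι → X → L} {s : Set X} (hf : ∀ i, ContinuousOn (f i) s) :
    ContinuousOn (fun x => ⨅ i, f i x) s := by
  simpa only [Finset.inf'_univ_eq_ciInf] using
    ContinuousOn.finset_inf'_apply Finset.univ_nonempty fun i _ => hf i

theorem le_mul_exp_neg_integral_of_deriv_le {W W' c : ℝ → ℝ} {a b : ℝ} (hab : a ≤ b)
    (hW : ContinuousOn W (Icc a b)) (hW' : ∀ t ∈ Ioo a b, HasDerivAt W (W' t) t)
    (hc : ContinuousOn c (Icc a b)) (hle : ∀ t ∈ Ioo a b, W' t ≤ -c t * W t) :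
    W b ≤ W a * Real.exp (-∫ s in a..b, c s) := by
  set I : ℝ → ℝ := fun t => ∫ s in a..t, c s
  have hI : ContinuousOn I (Icc a b) := by
    simpa only [uIcc_of_le hab] using
      intervalIntegral.continuousOn_primitive_interval
        (hc.integrableOn_Icc.mono_set (uIcc_of_le hab).subset)
  have hI' : ∀ t ∈ Ioo a b, HasDerivAt I (c t) t := fun t ht =>
    intervalIntegral.integral_hasDerivAt_right
      ((hc.mono (uIcc_of_le ht.1.le ▸ Icc_subset_Icc_right ht.2.le)).intervalIntegrable)
      ((hc.mono Ioo_subset_Icc_self).stronglyMeasurableAtFilter isOpen_Ioo t ht)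
      ((hc.mono Ioo_subset_Icc_self).continuousAt (isOpen_Ioo.mem_nhds ht))
  have hanti : AntitoneOn (fun t => W t * Real.exp (I t)) (Icc a b) := by
    refine antitoneOn_of_hasDerivWithinAt_nonpos (convex_Icc a b)
      (f' := fun t => W' t * Real.exp (I t) + W t * (Real.exp (I t) * c t))
      (hW.mul (Real.continuous_exp.comp_continuousOn hI)) (fun t ht => ?_) (fun t ht => ?_)
    · rw [interior_Icc] at ht
      exact ((hW' t ht).mul (hI' t ht).exp).hasDerivWithinAt
    · rw [interior_Icc] at ht
      nlinarith [hle t ht, Real.exp_pos (I t)]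
  have hmono := hanti (left_mem_Icc.2 hab) (right_mem_Icc.2 hab) hab
  simp only [I, intervalIntegral.integral_same, Real.exp_zero, mul_one] at hmono
  rwa [Real.exp_neg, ← div_eq_mul_inv, le_div_iff₀ (Real.exp_pos _)]

theorem tendsto_eval_mul_exp_neg_mul_atTop (p : Polynomial ℝ) {c : ℝ} (hc : 0 < c) :
    Tendsto (fun u => p.eval u * Real.exp (-(c * u))) atTop (𝓝 0) := by
  refine ((Polynomial.tendsto_div_exp_atTop (p.comp (Polynomial.C c⁻¹ * Polynomial.X))).comp
    (tendsto_id.const_mul_atTop hc)).congr fun u => ?_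
  simp [Polynomial.eval_comp, inv_mul_cancel_left₀ hc.ne', Real.exp_neg, div_eq_mul_inv]

theorem tendsto_div_sub_nhdsLT {T : ℝ} (hT : 0 < T) :
    Tendsto (fun t => T / (T - t)) (𝓝[<] T) atTop := by
  have hsub : Tendsto (fun t => T - t) (𝓝[<] T) (𝓝[>] 0) :=
    tendsto_nhdsWithin_of_tendsto_nhds_of_eventually_within _
      (by simpa using ((continuous_sub_left T).tendsto T).mono_left nhdsWithin_le_nhds)
      (eventually_nhdsWithin_of_forall fun t (ht : t < T) => sub_pos.2 ht)
  simpa only [div_eq_mul_inv, Function.comp_def] using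
    (tendsto_inv_nhdsGT_zero.comp hsub).const_mul_atTop hT

theorem integral_div_sub_sq {T t : ℝ} (ht : t ∈ Ico 0 T) :
    ∫ s in (0 : ℝ)..t, (T / (T - s)) ^ 2 = T * (T / (T - t) - 1) := by
  have hne : ∀ s ∈ uIcc 0 t, T - s ≠ 0 := fun s hs => by
    rw [uIcc_of_le ht.1] at hs
    exact (sub_pos.2 (hs.2.trans_lt ht.2)).ne'
  rw [intervalIntegral.integral_eq_sub_of_hasDerivAt (f := fun s => T ^ 2 / (T - s))]
  · have : T ≠ 0 := (ht.1.trans_lt ht.2).ne'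
    field_simp
    ring
  · intro s hs
    refine ((hasDerivAt_const s (T ^ 2)).fun_div ((hasDerivAt_id' s).const_sub T)
      (hne s hs)).congr_deriv ?_
    rw [div_pow]
    ring
  · exact (continuousOn_const.div (continuousOn_const.sub continuousOn_id) hne).pow 2
      |>.intervalIntegrable

theorem mul_sub_one_le_integral {m : ℝ → ℝ} {T p₀ t : ℝ} (hm : ContinuousOn m (Ico 0 T))
    (hmbd : ∀ s ∈ Ico 0 T, p₀ * (T / (T - s)) ^ 2 ≤ m s) (ht : t ∈ Ico 0 T) :
    p₀ * (T * (T / (T - t) - 1)) ≤ ∫ s in (0 : ℝ)..t, m s := by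
  have hsub : uIcc 0 t ⊆ Ico 0 T := uIcc_of_le ht.1 ▸ Icc_subset_Ico_right ht.2
  have hne : ∀ s ∈ uIcc 0 t, T - s ≠ 0 := fun s hs => (sub_pos.2 (hsub hs).2).ne'
  rw [← integral_div_sub_sq ht, ← intervalIntegral.integral_const_mul]
  refine intervalIntegral.integral_mono_on ht.1 ?_ ((hm.mono hsub).intervalIntegrable)
    fun s hs => hmbd s (hsub (uIcc_of_le ht.1 ▸ hs))
  exact (continuousOn_const.mul ((continuousOn_const.div
    (continuousOn_const.sub continuousOn_id) hne).pow 2)).intervalIntegrable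

theorem tendsto_nhdsLT_zero_of_le_mul_exp_neg_integral {f ψ m : ℝ → ℝ} {T p₀ δ C : ℝ}
    (p : Polynomial ℝ) (hT : 0 < T) (hp₀ : 0 < p₀) (hδ : 0 < δ) (hC : 0 ≤ C)
    (hm : ContinuousOn m (Ico 0 T)) (hmbd : ∀ t ∈ Ico 0 T, p₀ * (T / (T - t)) ^ 2 ≤ m t)
    (hψ : ∀ t ∈ Ico 0 T, ψ t ≤ p.eval (T / (T - t))) (hf : ∀ t ∈ Ico 0 T, 0 ≤ f t)
    (hfle : ∀ t ∈ Ico 0 T, f t ≤ C * ψ t * Real.exp (-δ * ∫ s in (0 : ℝ)..t, m s)) :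
    Tendsto f (𝓝[<] T) (𝓝 0) := by
  set c := δ * (p₀ * T)
  have hlim := ((tendsto_eval_mul_exp_neg_mul_atTop p (by positivity : 0 < c)).comp
    (tendsto_div_sub_nhdsLT hT)).const_mul (C * Real.exp c)
  rw [mul_zero] at hlim
  have hIco : Ico 0 T ∈ 𝓝[<] T := Ico_mem_nhdsLT hT
  refine squeeze_zero' (eventually_of_mem hIco hf) (eventually_of_mem hIco fun t ht => ?_) hlim
  have hCψ : 0 ≤ C * ψ t :=
    nonneg_of_mul_nonneg_left ((hf t ht).trans (hfle t ht)) (Real.exp_pos _)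
  have hexp : -δ * ∫ s in (0 : ℝ)..t, m s ≤ -(δ * (p₀ * (T * (T / (T - t) - 1)))) := by
    rw [neg_mul, neg_le_neg_iff]
    exact mul_le_mul_of_nonneg_left (mul_sub_one_le_integral hm hmbd ht) hδ.le
  calc f t ≤ C * ψ t * Real.exp (-δ * ∫ s in (0 : ℝ)..t, m s) := hfle t ht
    _ ≤ C * ψ t * Real.exp (-(δ * (p₀ * (T * (T / (T - t) - 1))))) := by gcongr
    _ ≤ C * p.eval (T / (T - t)) * Real.exp (-(δ * (p₀ * (T * (T / (T - t) - 1))))) := by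
      gcongr
      exact hψ t ht
    _ = _ := by
      rw [show -(δ * (p₀ * (T * (T / (T - t) - 1)))) = c + -(c * (T / (T - t))) by ring,
        Real.exp_add, Function.comp_apply]
      ring

section CooperativeSystem

variable {ι : Type*} [Fintype ι]

theorem of_ite_neg_mulVec_apply {R : Type*} [DecidableEq ι] [Ring R] (a : ι → R)
    (b : ι → ι → R) (v : ι → R) (i : ι) :
    ((Matrix.of fun i j => if i = j then -a i else b i j) *ᵥ v) i =
      -a i * v i + ∑ j, if j = i then 0 else b i j * v j := by
  simp only [mulVec, dotProduct, of_apply, ite_mul]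
  have hdiag : -a i * v i = ∑ j, if j = i then -a i * v j else 0 := by simp
  rw [hdiag, ← Finset.sum_add_distrib]
  refine Finset.sum_congr rfl fun j _ => ?_
  by_cases h : i = j <;> simp [h, eq_comm]

theorem dotProduct_mulVec_le_of_vecMul_le {A : Matrix ι ι ℝ} {q v : ι → ℝ} {δ : ℝ}
    (hqA : ∀ j, (q ᵥ* A) j ≤ -δ * q j) (hv : 0 ≤ v) : q ⬝ᵥ (A *ᵥ v) ≤ -δ * (q ⬝ᵥ v) := by
  rw [dotProduct_mulVec, dotProduct, dotProduct, Finset.mul_sum]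
  exact Finset.sum_le_sum fun j _ => by
    rw [← mul_assoc]
    exact mul_le_mul_of_nonneg_right (hqA j) (hv j)

/-- The left-hand side is the quotient-rule derivative of the Lyapunov function `∑ⱼ qⱼ Vⱼ / φⱼ`
at a fixed time. -/
theorem sum_quotient_deriv_le {A : Matrix ι ι ℝ} {q v v' w w' : ι → ℝ} {δ m : ℝ}
    (hq : 0 ≤ q) (hqA : ∀ j, (q ᵥ* A) j ≤ -δ * q j) (hδ : 0 ≤ δ) (hv : 0 ≤ v)
    (hw : ∀ j, 0 < w j) (hw' : 0 ≤ w') (hm : ∀ j, m ≤ w j)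
    (hv' : ∀ j, v' j ≤ w j * (A *ᵥ v) j) :
    ∑ j, (q j * v' j * w j - q j * v j * w' j) / w j ^ 2 ≤ -(δ * m) * ∑ j, q j * v j / w j := by
  have hmv : m * ∑ j, q j * v j / w j ≤ q ⬝ᵥ v := by
    rw [Finset.mul_sum, dotProduct]
    refine Finset.sum_le_sum fun j _ => ?_
    rw [mul_div_assoc', div_le_iff₀ (hw j)]
    nlinarith [mul_nonneg (hq j) (hv j), hm j]
  calc ∑ j, (q j * v' j * w j - q j * v j * w' j) / w j ^ 2
      ≤ ∑ j, q j * (A *ᵥ v) j := Finset.sum_le_sum fun j _ => by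
        rw [div_le_iff₀ (pow_pos (hw j) 2)]
        nlinarith [mul_nonneg (mul_nonneg (hq j) (hv j)) (hw' j),
          mul_le_mul_of_nonneg_left (hv' j) (mul_nonneg (hq j) (hw j).le)]
    _ ≤ -δ * (q ⬝ᵥ v) := dotProduct_mulVec_le_of_vecMul_le hqA hv
    _ ≤ -(δ * m) * ∑ j, q j * v j / w j := by nlinarith [mul_le_mul_of_nonneg_left hmv hδ]

variable {A : Matrix ι ι ℝ} {q : ι → ℝ} {δ T : ℝ} {φ φ' V V' : ι → ℝ → ℝ}

theorem sum_div_le_mul_exp_neg_integral_iInf [Nonempty ι] (hq : 0 ≤ q)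
    (hqA : ∀ j, (q ᵥ* A) j ≤ -δ * q j) (hδ : 0 ≤ δ)
    (hφ : ∀ i, ∀ t ∈ Ico 0 T, HasDerivAt (φ i) (φ' i t) t)
    (hφmono : ∀ i, MonotoneOn (φ i) (Ico 0 T)) (hφpos : ∀ i, ∀ t ∈ Ico 0 T, 0 < φ i t)
    (hV : ∀ i, ∀ t ∈ Ico 0 T, HasDerivAt (V i) (V' i t) t)
    (hVnn : ∀ i, ∀ t ∈ Ico 0 T, 0 ≤ V i t)
    (hV' : ∀ i, ∀ t ∈ Ico 0 T, V' i t ≤ φ i t * (A *ᵥ fun j => V j t) i)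
    {t : ℝ} (ht : t ∈ Ico 0 T) :
    ∑ j, q j * V j t / φ j t ≤
      (∑ j, q j * V j 0 / φ j 0) * Real.exp (-δ * ∫ s in (0 : ℝ)..t, ⨅ j, φ j s) := by
  have hsub : Icc 0 t ⊆ Ico 0 T := Icc_subset_Ico_right ht.2
  have hW : ∀ s ∈ Ico 0 T, HasDerivAt (fun s => ∑ j, q j * V j s / φ j s)
      (∑ j, (q j * V' j s * φ j s - q j * V j s * φ' j s) / φ j s ^ 2) s := fun s hs =>
    HasDerivAt.fun_sum fun j _ =>
      ((hV j s hs).const_mul (q j)).div (hφ j s hs) (hφpos j s hs).ne'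
  have hmin : ContinuousOn (fun s => ⨅ j, φ j s) (Ico 0 T) :=
    ContinuousOn.ciInf_apply fun j s hs => (hφ j s hs).continuousAt.continuousWithinAt
  rw [neg_mul, ← intervalIntegral.integral_const_mul]
  refine le_mul_exp_neg_integral_of_deriv_le ht.1
    (fun s hs => (hW s (hsub hs)).continuousAt.continuousWithinAt)
    (fun s hs => hW s (hsub (Ioo_subset_Icc_self hs))) (continuousOn_const.mul (hmin.mono hsub))
    (fun s hs => ?_)
  have hs' : s ∈ Ico 0 T := hsub (Ioo_subset_Icc_self hs)
  exact sum_quotient_deriv_le hq hqA hδ (fun j => hVnn j s hs') (fun j => hφpos j s hs')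
    (fun j => (hφ j s hs').hasDerivWithinAt.nonneg_of_monotoneOn (accPt_Ico hs') (hφmono j))
    (fun j => ciInf_le (Finite.bddBelow_range _) j) (fun j => hV' j s hs')

theorem le_mul_exp_neg_integral_iInf (hq : ∀ i, 0 < q i)
    (hqA : ∀ j, (q ᵥ* A) j ≤ -δ * q j) (hδ : 0 ≤ δ)
    (hφ : ∀ i, ∀ t ∈ Ico 0 T, HasDerivAt (φ i) (φ' i t) t)
    (hφmono : ∀ i, MonotoneOn (φ i) (Ico 0 T)) (hφpos : ∀ i, ∀ t ∈ Ico 0 T, 0 < φ i t)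
    (hV : ∀ i, ∀ t ∈ Ico 0 T, HasDerivAt (V i) (V' i t) t)
    (hVnn : ∀ i, ∀ t ∈ Ico 0 T, 0 ≤ V i t)
    (hV' : ∀ i, ∀ t ∈ Ico 0 T, V' i t ≤ φ i t * (A *ᵥ fun j => V j t) i)
    (i : ι) {t : ℝ} (ht : t ∈ Ico 0 T) :
    V i t ≤ φ i t / q i * (∑ j, q j * V j 0 / φ j 0) *
      Real.exp (-δ * ∫ s in (0 : ℝ)..t, ⨅ j, φ j s) := by
  have : Nonempty ι := ⟨i⟩
  have hW := sum_div_le_mul_exp_neg_integral_iInf (fun j => (hq j).le) hqA hδ hφ hφmono hφpos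
    hV hVnn hV' ht
  have hi : q i * V i t / φ i t ≤ ∑ j, q j * V j t / φ j t :=
    Finset.single_le_sum (f := fun j => q j * V j t / φ j t)
      (fun j _ => div_nonneg (mul_nonneg (hq j).le (hVnn j t ht)) (hφpos j t ht).le)
      (Finset.mem_univ i)
  calc V i t = φ i t / q i * (q i * V i t / φ i t) := by
        field_simp [(hq i).ne', (hφpos i t ht).ne']
    _ ≤ _ := mul_le_mul_of_nonneg_left (hi.trans hW) (div_nonneg (hφpos i t ht).le (hq i).le)
    _ = _ := by ring

end CooperativeSystem

theorem stmt17_general (T p₀ δ : ℝ) (hT : 0 < T) (hp₀ : 0 < p₀) (hδ : 0 < δ)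
    (n : ℕ)
    (a : Fin n → ℝ) (b : Fin n → Fin n → ℝ)
    (A : Matrix (Fin n) (Fin n) ℝ)
    (hA : A = Matrix.of fun i j => if i = j then -a i else b i j)
    (q : Fin n → ℝ) (hq : ∀ i, 0 < q i)
    (hqA : ∀ j, (q ᵥ* A) j ≤ -δ * q j)
    (φ : Fin n → ℝ → ℝ) (φ' : Fin n → ℝ → ℝ)
    (p₂ : Polynomial ℝ)
    (hφd : ∀ i, ∀ t ∈ Set.Ico 0 T, HasDerivAt (φ i) (φ' i t) t)
    (hφmono : ∀ i, MonotoneOn (φ i) (Set.Ico 0 T))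
    (hφbd : ∀ i, ∀ t ∈ Set.Ico 0 T,
      p₀ * (T / (T - t)) ^ 2 ≤ φ i t ∧ φ i t ≤ p₂.eval (T / (T - t)))
    (V V' : Fin n → ℝ → ℝ)
    (hVnn : ∀ i, ∀ t ∈ Set.Ico 0 T, 0 ≤ V i t)
    (hderiv : ∀ i, ∀ t ∈ Set.Ico 0 T, HasDerivAt (V i) (V' i t) t)
    (hineq : ∀ i, ∀ t ∈ Set.Ico 0 T,
      V' i t ≤ φ i t * (-a i * V i t + ∑ j, if j = i then 0 else b i j * V j t)) :
    (∀ i, ∀ t ∈ Set.Ico 0 T,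
      V i t ≤ (φ i t / q i) * (∑ j, q j * V j 0 / φ j 0) *
        Real.exp (-δ * ∫ s in (0:ℝ)..t, ⨅ j, φ j s)) ∧
    ∀ i, Tendsto (V i) (nhdsWithin T (Set.Iio T)) (nhds 0) := by
  have hφpos : ∀ i, ∀ t ∈ Ico 0 T, 0 < φ i t := fun i t ht =>
    (mul_pos hp₀ (pow_pos (div_pos hT (sub_pos.2 ht.2)) 2)).trans_le (hφbd i t ht).1
  have hV' : ∀ i, ∀ t ∈ Ico 0 T, V' i t ≤ φ i t * (A *ᵥ fun j => V j t) i := by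
    subst hA
    simpa only [of_ite_neg_mulVec_apply] using hineq
  have hbound := fun i t (ht : t ∈ Ico 0 T) =>
    le_mul_exp_neg_integral_iInf hq hqA hδ.le hφd hφmono hφpos hderiv hVnn hV' i ht
  refine ⟨hbound, fun i => ?_⟩
  have : Nonempty (Fin n) := ⟨i⟩
  have hW₀ : 0 ≤ ∑ j, q j * V j 0 / φ j 0 := Finset.sum_nonneg fun j _ =>
    div_nonneg (mul_nonneg (hq j).le (hVnn j 0 ⟨le_rfl, hT⟩)) (hφpos j 0 ⟨le_rfl, hT⟩).le
  exact tendsto_nhdsLT_zero_of_le_mul_exp_neg_integral p₂ hT hp₀ hδ (div_nonneg hW₀ (hq i).le)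
    (ContinuousOn.ciInf_apply fun j s hs => (hφd j s hs).continuousAt.continuousWithinAt)
    (fun t ht => le_ciInf fun j => (hφbd j t ht).1) (fun t ht => (hφbd i t ht).2) (hVnn i)
    fun t ht => (hbound i t ht).trans_eq (by ring)

theorem stmt17 (T p₀ δ : ℝ) (hT : 0 < T) (hp₀ : 0 < p₀) (hδ : 0 < δ)
    (n : ℕ) (hn : 0 < n)
    (a : Fin n → ℝ) (b : Fin n → Fin n → ℝ)
    (ha : ∀ i, 0 < a i) (hb : ∀ i j, i ≠ j → 0 < b i j)
    (A : Matrix (Fin n) (Fin n) ℝ)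
    (hA : A = Matrix.of fun i j => if i = j then -a i else b i j)
    (q : Fin n → ℝ) (hq : ∀ i, 0 < q i)
    (hqA : ∀ j, (q ᵥ* A) j ≤ -δ * q j)
    (φ : Fin n → ℝ → ℝ) (φ' : Fin n → ℝ → ℝ)
    (p₂ : Polynomial ℝ) (hp₂ : ∀ m, 0 ≤ p₂.coeff m)
    (hφd : ∀ i, ∀ t ∈ Set.Ico 0 T, HasDerivAt (φ i) (φ' i t) t)
    (hφmono : ∀ i, MonotoneOn (φ i) (Set.Ico 0 T))
    (hφbd : ∀ i, ∀ t ∈ Set.Ico 0 T,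
      p₀ * (T / (T - t)) ^ 2 ≤ φ i t ∧ φ i t ≤ p₂.eval (T / (T - t)))
    (V V' : Fin n → ℝ → ℝ)
    (hVnn : ∀ i, ∀ t ∈ Set.Ico 0 T, 0 ≤ V i t)
    (hderiv : ∀ i, ∀ t ∈ Set.Ico 0 T, HasDerivAt (V i) (V' i t) t)
    (hineq : ∀ i, ∀ t ∈ Set.Ico 0 T,
      V' i t ≤ φ i t * (-a i * V i t + ∑ j, if j = i then 0 else b i j * V j t)) :
    (∀ i, ∀ t ∈ Set.Ico 0 T,
      V i t ≤ (φ i t / q i) * (∑ j, q j * V j 0 / φ j 0) *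
        Real.exp (-δ * ∫ s in (0:ℝ)..t, ⨅ j, φ j s)) ∧
    ∀ i, Tendsto (V i) (nhdsWithin T (Set.Iio T)) (nhds 0) :=
  stmt17_general T p₀ δ hT hp₀ hδ n a b A hA q hq hqA φ φ' p₂ hφd hφmono hφbd V V' hVnn hderiv hineq
end

section
/- Let T > 0 and let x₁, x₂ : [0,T) → ℝ solve ẋ₁ = -φ₁(t)x₁ and ẋ₂ = -φ₂(t)x₂ + (1+φ₂²(t))x₁³, where φ₁(t) = (T/(T-t))² and φ₂(t) = (T/(T-t))³. Then lim_{t→T⁻} x₁(t) = 0 and lim_{t→T⁻} x₂(t) = 0. -/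
/-!
Both components are dominated by envelopes `K * exp (-(T * v t))`, `v t = T / (T - t)`, which
vanish as `t → T⁻`. They come from the integrating factor `exp P`, `P' = p`, of `y' = -p y + q`:
if `|q| ≤ z' + p z` and `|y a| ≤ z a`, then `|y| ≤ z`. Here `T * v` is a primitive of
`φ₁ = v ^ 2` and `T / 2 * v ^ 2` one of `φ₂ = v ^ 3`. For `x₁` the envelope is the exact
solution. For `x₂` the forcing `(1 + φ₂ ^ 2) x₁ ^ 3` is `O((1 + v ^ 6) exp (-3 T v))`,
eventually below `(φ₂ - φ₁) K exp (-T v)` since `exp (-2 T v)` beats the polynomial.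
-/

open Filter Set Real Topology

section LinearDifferentialInequality

variable {a b : ℝ}

theorem nonneg_of_hasDerivAt_add_mul_nonneg {p P w w' : ℝ → ℝ}
    (hP : ∀ t ∈ Ico a b, HasDerivAt P (p t) t) (hw : ∀ t ∈ Ico a b, HasDerivAt w (w' t) t)
    (hw' : ∀ t ∈ Ico a b, 0 ≤ w' t + p t * w t) (ha : 0 ≤ w a) :
    ∀ t ∈ Ico a b, 0 ≤ w t := by
  have hu : ∀ t ∈ Ico a b,
      HasDerivAt (fun s ↦ w s * exp (P s)) ((w' t + p t * w t) * exp (P t)) t :=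
    fun t ht ↦ ((hw t ht).mul (hP t ht).exp).congr_deriv (by ring)
  have hmono : MonotoneOn (fun s ↦ w s * exp (P s)) (Ico a b) :=
    monotoneOn_of_hasDerivWithinAt_nonneg (convex_Ico a b)
      (fun t ht ↦ (hu t ht).continuousAt.continuousWithinAt)
      (fun t ht ↦ (hu t (interior_subset ht)).hasDerivWithinAt)
      (fun t ht ↦ mul_nonneg (hw' t (interior_subset ht)) (exp_pos _).le)
  intro t ht
  have hat : w a * exp (P a) ≤ w t * exp (P t) := hmono ⟨le_rfl, ht.1.trans_lt ht.2⟩ ht ht.1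
  exact (mul_nonneg_iff_of_pos_right (exp_pos _)).1 ((mul_nonneg ha (exp_pos _).le).trans hat)

theorem abs_le_of_hasDerivAt_linear {p P q y z z' : ℝ → ℝ}
    (hP : ∀ t ∈ Ico a b, HasDerivAt P (p t) t)
    (hy : ∀ t ∈ Ico a b, HasDerivAt y (-p t * y t + q t) t)
    (hz : ∀ t ∈ Ico a b, HasDerivAt z (z' t) t)
    (hq : ∀ t ∈ Ico a b, |q t| ≤ z' t + p t * z t) (ha : |y a| ≤ z a) :
    ∀ t ∈ Ico a b, |y t| ≤ z t := by
  intro t ht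
  have hsub := nonneg_of_hasDerivAt_add_mul_nonneg (w := fun s ↦ z s - y s) hP
    (fun s hs ↦ (hz s hs).sub (hy s hs))
    (fun s hs ↦ by linear_combination hq s hs + le_abs_self (q s))
    (by linear_combination ha + le_abs_self (y a)) t ht
  have hadd := nonneg_of_hasDerivAt_add_mul_nonneg (w := fun s ↦ z s + y s) hP
    (fun s hs ↦ (hz s hs).add (hy s hs))
    (fun s hs ↦ by linear_combination hq s hs + neg_abs_le (q s))
    (by linear_combination ha + neg_abs_le (y a)) t ht
  exact abs_le.2 ⟨by linarith, by linarith⟩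

end LinearDifferentialInequality

section PrescribedTime

variable {T : ℝ}

theorem hasDerivAt_div_sub_pow (n : ℕ) {t : ℝ} (ht : t ≠ T) :
    HasDerivAt (fun s ↦ T / (n + 1) * (T / (T - s)) ^ (n + 1)) ((T / (T - t)) ^ (n + 2)) t := by
  have hne : T - t ≠ 0 := sub_ne_zero.2 ht.symm
  have hv : HasDerivAt (fun s ↦ T / (T - s)) (T / (T - t) ^ 2) t := by
    refine (((hasDerivAt_id' t).const_sub T).inv hne |>.const_mul T).congr_deriv ?_
    field_simp
  refine ((hv.pow (n + 1)).const_mul (T / (n + 1))).congr_deriv ?_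
  push_cast [Nat.add_sub_cancel, div_pow]
  field_simp
  ring

theorem tendsto_div_sub_nhdsLT_atTop (hT : 0 < T) :
    Tendsto (fun t ↦ T / (T - t)) (𝓝[<] T) atTop := by
  have h : Tendsto (fun t ↦ T - t) (𝓝[<] T) (𝓝[>] 0) := by
    refine tendsto_nhdsWithin_of_tendsto_nhds_of_eventually_within _ ?_ ?_
    · simpa using ((tendsto_const_nhds (x := T)).sub (tendsto_id (x := 𝓝 T))).mono_left
        (nhdsWithin_le_nhds (s := Iio T))
    · filter_upwards [self_mem_nhdsWithin] with t (ht : t < T) using sub_pos.2 ht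
  simpa only [div_eq_mul_inv, Pi.inv_apply] using h.inv_tendsto_nhdsGT_zero.const_mul_atTop hT

theorem eventually_mul_exp_sq_le_cube_sub_sq (hT : 0 < T) :
    ∀ᶠ v in atTop, (1 + (v ^ 3) ^ 2) * exp (-(T * v)) ^ 2 ≤ v ^ 3 - v ^ 2 := by
  have hpoly : (fun v : ℝ ↦ 1 + (v ^ 3) ^ 2) =o[atTop] fun v ↦ exp (2 * T * v) := by
    have h := (isLittleO_pow_exp_pos_mul_atTop 0 (by positivity : 0 < 2 * T)).add
      (isLittleO_pow_exp_pos_mul_atTop 6 (by positivity : 0 < 2 * T))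
    simpa [← pow_mul] using h
  filter_upwards [hpoly.bound one_pos, eventually_ge_atTop 2] with v hbound hv
  have hexp : exp (-(T * v)) ^ 2 * exp (2 * T * v) = 1 := by
    rw [← exp_nat_mul, ← exp_add]; ring_nf; exact exp_zero
  have hbound' : 1 + (v ^ 3) ^ 2 ≤ exp (2 * T * v) := by
    simpa [abs_of_nonneg (by positivity : (0 : ℝ) ≤ 1 + (v ^ 3) ^ 2)] using hbound
  calc (1 + (v ^ 3) ^ 2) * exp (-(T * v)) ^ 2 ≤ exp (2 * T * v) * exp (-(T * v)) ^ 2 :=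
        mul_le_mul_of_nonneg_right hbound' (by positivity)
    _ = 1 := by rw [mul_comm, hexp]
    _ ≤ v ^ 3 - v ^ 2 := by nlinarith

theorem tendsto_exp_neg_mul_div_sub (hT : 0 < T) :
    Tendsto (fun t ↦ exp (-(T * (T / (T - t))))) (𝓝[<] T) (𝓝 0) :=
  tendsto_exp_atBot.comp <| tendsto_neg_atTop_atBot.comp <|
    (tendsto_div_sub_nhdsLT_atTop hT).const_mul_atTop hT

theorem abs_le_mul_exp_of_hasDerivAt_neg_sq_mul (hT : 0 < T) {x : ℝ → ℝ}
    (hx : ∀ t ∈ Ico 0 T, HasDerivAt x (-(T / (T - t)) ^ 2 * x t) t) :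
    ∀ t ∈ Ico 0 T, |x t| ≤ |x 0| * exp T * exp (-(T * (T / (T - t)))) := by
  have hP : ∀ t ∈ Ico 0 T, HasDerivAt (fun s ↦ T * (T / (T - s))) ((T / (T - t)) ^ 2) t :=
    fun t ht ↦ by simpa using hasDerivAt_div_sub_pow 0 ht.2.ne
  refine abs_le_of_hasDerivAt_linear hP (q := 0) (fun t ht ↦ by simpa using hx t ht)
    (fun t ht ↦ ((hP t ht).neg.exp.const_mul _)) (fun t _ ↦ le_of_eq ?_) ?_
  · simp only [Pi.zero_apply, Pi.neg_apply, abs_zero]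
    ring
  · rw [sub_zero, div_self hT.ne', mul_one, mul_assoc, ← exp_add, add_neg_cancel, exp_zero,
      mul_one]

theorem exists_abs_le_mul_exp_of_hasDerivAt_cascade (hT : 0 < T) {x₁ x₂ : ℝ → ℝ} {c : ℝ}
    (hx₁ : ∀ t ∈ Ico 0 T, |x₁ t| ≤ c * exp (-(T * (T / (T - t)))))
    (hx₂ : ∀ t ∈ Ico 0 T, HasDerivAt x₂
        (-(T / (T - t)) ^ 3 * x₂ t + (1 + ((T / (T - t)) ^ 3) ^ 2) * (x₁ t) ^ 3) t) :
    ∃ K, ∀ᶠ t in 𝓝[<] T, |x₂ t| ≤ K * exp (-(T * (T / (T - t)))) := by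
  obtain ⟨t₀, ht₀T, ht₀⟩ := mem_nhdsLT_iff_exists_Ico_subset.1 <|
    inter_mem (Ioo_mem_nhdsLT hT) <|
      (tendsto_div_sub_nhdsLT_atTop hT).eventually (eventually_mul_exp_sq_le_cube_sub_sq hT)
  have hsub : Ico t₀ T ⊆ Ico 0 T := fun t ht ↦ ⟨(ht₀ ht).1.1.le, ht.2⟩
  set K := c ^ 3 + |x₂ t₀| * exp (T * (T / (T - t₀)))
  have hc : 0 ≤ c := (mul_nonneg_iff_of_pos_right (exp_pos _)).1 <|
    (abs_nonneg _).trans (hx₁ 0 ⟨le_rfl, hT⟩)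
  have hK : c ^ 3 ≤ K := le_add_of_nonneg_right (by positivity)
  have hP : ∀ t ∈ Ico t₀ T,
      HasDerivAt (fun s ↦ T / 2 * (T / (T - s)) ^ 2) ((T / (T - t)) ^ 3) t :=
    fun t ht ↦ by simpa [one_add_one_eq_two] using hasDerivAt_div_sub_pow 1 ht.2.ne
  have hQ : ∀ t ∈ Ico t₀ T, HasDerivAt (fun s ↦ T * (T / (T - s))) ((T / (T - t)) ^ 2) t :=
    fun t ht ↦ by simpa using hasDerivAt_div_sub_pow 0 ht.2.ne
  refine ⟨K, mem_of_superset (Ico_mem_nhdsLT ht₀T) <|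
    abs_le_of_hasDerivAt_linear hP (fun t ht ↦ hx₂ t (hsub ht))
      (fun t ht ↦ (hQ t ht).neg.exp.const_mul K) (fun t ht ↦ ?_) ?_⟩
  · set v := T / (T - t)
    set e := exp (-(T * v))
    have hforce : (1 + (v ^ 3) ^ 2) * e ^ 2 ≤ v ^ 3 - v ^ 2 := (ht₀ ht).2
    have hv : 0 ≤ v ^ 3 - v ^ 2 := le_trans (by positivity) hforce
    calc |(1 + (v ^ 3) ^ 2) * x₁ t ^ 3| = (1 + (v ^ 3) ^ 2) * |x₁ t| ^ 3 := by
          rw [abs_mul, abs_pow, abs_of_pos (by positivity)]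
      _ ≤ (1 + (v ^ 3) ^ 2) * (c * e) ^ 3 := by gcongr; exact hx₁ t (hsub ht)
      _ = (1 + (v ^ 3) ^ 2) * e ^ 2 * (c ^ 3 * e) := by ring
      _ ≤ (v ^ 3 - v ^ 2) * (K * e) := by gcongr
      _ = _ := by simp only [Pi.neg_apply]; ring
  · show |x₂ t₀| ≤ K * exp (-(T * (T / (T - t₀))))
    rw [add_mul, mul_assoc, ← exp_add, add_neg_cancel, exp_zero, mul_one]
    exact le_add_of_nonneg_left (by positivity)

end PrescribedTime

theorem stmt19 (T : ℝ) (hT : 0 < T)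
    (x₁ x₂ : ℝ → ℝ)
    (hx₁ : ∀ t ∈ Set.Ico 0 T,
      HasDerivAt x₁ (-(T / (T - t)) ^ 2 * x₁ t) t)
    (hx₂ : ∀ t ∈ Set.Ico 0 T,
      HasDerivAt x₂
        (-(T / (T - t)) ^ 3 * x₂ t + (1 + ((T / (T - t)) ^ 3) ^ 2) * (x₁ t) ^ 3) t) :
    Tendsto x₁ (nhdsWithin T (Set.Iio T)) (nhds 0) ∧
    Tendsto x₂ (nhdsWithin T (Set.Iio T)) (nhds 0) := by
  have hx₁_le := abs_le_mul_exp_of_hasDerivAt_neg_sq_mul hT hx₁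
  obtain ⟨K, hx₂_le⟩ := exists_abs_le_mul_exp_of_hasDerivAt_cascade hT hx₁_le hx₂
  have hdecay := tendsto_exp_neg_mul_div_sub hT
  refine ⟨squeeze_zero_norm' ?_ (by simpa using hdecay.const_mul (|x₁ 0| * exp T)),
    squeeze_zero_norm' hx₂_le (by simpa using hdecay.const_mul K)⟩
  filter_upwards [Ioo_mem_nhdsLT hT] with t ht using hx₁_le t (Ioo_subset_Ico_self ht)
end
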